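/- arXiv:0912.3609 — 7 statements merged into one kernel-verified Lean document; each statement's English description precedes it below -/
import Mathlib

section
/- For every nonnegative integer s, v_{2s+1} - 2 = m·(u_s + u_{s+1})², where u and v satisfy the recurrences u_0 = 0, u_1 = 1, v_0 = 2, v_1 = m+2, and x_p = (m+2)x_{p-1} - x_{p-2}. -/
/-!
Put `c = m + 2`. The sequence `u` satisfies the Cassini-type invariant
`u (n+1)² - c u n u (n+1) + u n² = 1`, and with it a simultaneous induction gives
`v (2n+1) - 2 = (c - 2) (u n + u (n+1))²` and `v (2n+2) - 2 = (c² - 4) u (n+1)²`: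
each identity for the next index is `c` times the previous one minus the one before,
corrected by a multiple of the invariant.
-/

section LucasSequence

variable {R : Type*} [CommRing R] (c : R) {u v : ℕ → R}

theorem lucas_cassini (hu0 : u 0 = 0) (hu1 : u 1 = 1)
    (hu : ∀ n, u (n + 2) = c * u (n + 1) - u n) (n : ℕ) :
    u (n + 1) ^ 2 - c * u n * u (n + 1) + u n ^ 2 = 1 := by
  induction n with
  | zero => rw [hu0, hu1]; ring
  | succ n ih =>
    rw [hu n]
    linear_combination ih

theorem lucas_companion_sub_two (hu0 : u 0 = 0) (hu1 : u 1 = 1)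
    (hu : ∀ n, u (n + 2) = c * u (n + 1) - u n)
    (hv0 : v 0 = 2) (hv1 : v 1 = c) (hv : ∀ n, v (n + 2) = c * v (n + 1) - v n) (n : ℕ) :
    v (2 * n + 1) - 2 = (c - 2) * (u n + u (n + 1)) ^ 2 ∧
      v (2 * n + 2) - 2 = (c ^ 2 - 4) * u (n + 1) ^ 2 := by
  have cassini := lucas_cassini c hu0 hu1 hu
  induction n with
  | zero =>
    refine ⟨?_, ?_⟩
    · rw [hv1, hu0, hu1]; ring
    · rw [hv 0, hv0, hv1, hu1]; ring
  | succ n ih =>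
    have odd : v (2 * (n + 1) + 1) - 2 = (c - 2) * (u (n + 1) + u (n + 2)) ^ 2 := by
      rw [show 2 * (n + 1) + 1 = 2 * n + 1 + 2 by ring, hv, hu n]
      linear_combination c * ih.2 - ih.1 - 2 * (c - 2) * cassini n
    refine ⟨odd, ?_⟩
    rw [show 2 * (n + 1) + 2 = 2 * n + 2 + 2 by ring, hv,
      show 2 * n + 2 + 1 = 2 * (n + 1) + 1 by ring]
    linear_combination c * odd - ih.2 - 2 * (c - 2) * cassini (n + 1)

end LucasSequence

theorem stmt6_general (m : ℕ) (u v : ℕ → ℤ)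
    (hu0 : u 0 = 0) (hu1 : u 1 = 1)
    (hurec : ∀ p, 2 ≤ p → u p = (m + 2) * u (p - 1) - u (p - 2))
    (hv0 : v 0 = 2) (hv1 : v 1 = m + 2)
    (hvrec : ∀ p, 2 ≤ p → v p = (m + 2) * v (p - 1) - v (p - 2)) :
    ∀ s : ℕ, v (2 * s + 1) - 2 = m * (u s + u (s + 1)) ^ 2 := by
  intro s
  have hu : ∀ n, u (n + 2) = (m + 2) * u (n + 1) - u n := fun n => by
    simpa using hurec (n + 2) (by omega)
  have hv : ∀ n, v (n + 2) = (m + 2) * v (n + 1) - v n := fun n => by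
    simpa using hvrec (n + 2) (by omega)
  have := (lucas_companion_sub_two ((m : ℤ) + 2) hu0 hu1 hu hv0 hv1 hv s).1
  rwa [add_sub_cancel_right] at this

/-- For every nonnegative integer `s`, `v (2s+1) - 2 = m * (u s + u (s+1))²`. -/
theorem stmt6 (m : ℕ) (hm : 1 ≤ m) (u v : ℕ → ℤ)
    (hu0 : u 0 = 0) (hu1 : u 1 = 1)
    (hurec : ∀ p, 2 ≤ p → u p = (m + 2) * u (p - 1) - u (p - 2))
    (hv0 : v 0 = 2) (hv1 : v 1 = m + 2)
    (hvrec : ∀ p, 2 ≤ p → v p = (m + 2) * v (p - 1) - v (p - 2)) :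
    ∀ s : ℕ, v (2 * s + 1) - 2 = m * (u s + u (s + 1)) ^ 2 :=
  stmt6_general m u v hu0 hu1 hurec hv0 hv1 hvrec
end

section
/- For every nonnegative integer s, gcd(u_{2s+2} - 1, u_{2s+1}) = u_s + u_{s+1}. -/
/-!
Write `k = m + 2`, so that `u` is the Lucas sequence `U(k, 1)`. The invariant
`u (p+1)^2 - k u p u (p+1) + u p^2 = 1` and the doubling formulas factor
`u (2s+1) = (u (s+1) + u s) (u (s+1) - u s)` and
`u (2s+2) - 1 = (u (s+1) + u s) ((k-1) u (s+1) - u s)`; the same invariant is a Bézout relation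
between the two cofactors, so the gcd is `u (s+1) + u s`.
-/

structure IsLucasU {R : Type*} [CommRing R] (k : R) (u : ℕ → R) : Prop where
  zero : u 0 = 0
  one : u 1 = 1
  succ_succ : ∀ p, u (p + 2) = k * u (p + 1) - u p

namespace IsLucasU

section CommRing

variable {R : Type*} [CommRing R] {k : R} {u : ℕ → R}

theorem sq_sub_mul_add_sq (hu : IsLucasU k u) (p : ℕ) :
    u (p + 1) ^ 2 - k * u p * u (p + 1) + u p ^ 2 = 1 := by
  induction p with
  | zero => simp [hu.zero, hu.one]
  | succ n ih => rw [hu.succ_succ n]; linear_combination ih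

theorem two_mul_add_one_and_two_mul_add_two (hu : IsLucasU k u) (s : ℕ) :
    u (2 * s + 1) = u (s + 1) ^ 2 - u s ^ 2 ∧
      u (2 * s + 2) = k * u (s + 1) ^ 2 - 2 * u s * u (s + 1) := by
  induction s with
  | zero => simp [hu.succ_succ 0, hu.zero, hu.one]
  | succ n ih =>
    have hodd : u (2 * (n + 1) + 1) = k * u (2 * n + 2) - u (2 * n + 1) := hu.succ_succ (2 * n + 1)
    have heven : u (2 * (n + 1) + 2) = k * u (2 * (n + 1) + 1) - u (2 * n + 2) :=
      hu.succ_succ (2 * n + 2)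
    rw [heven, hodd, ih.1, ih.2, hu.succ_succ n]
    constructor <;> ring

theorem two_mul_add_one_eq_mul (hu : IsLucasU k u) (s : ℕ) :
    u (2 * s + 1) = (u (s + 1) + u s) * (u (s + 1) - u s) := by
  rw [(hu.two_mul_add_one_and_two_mul_add_two s).1]; ring

theorem two_mul_add_two_sub_one_eq_mul (hu : IsLucasU k u) (s : ℕ) :
    u (2 * s + 2) - 1 = (u (s + 1) + u s) * ((k - 1) * u (s + 1) - u s) := by
  rw [(hu.two_mul_add_one_and_two_mul_add_two s).2]
  linear_combination hu.sq_sub_mul_add_sq s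

theorem isCoprime_cofactors (hu : IsLucasU k u) (s : ℕ) :
    IsCoprime ((k - 1) * u (s + 1) - u s) (u (s + 1) - u s) :=
  ⟨-u s, u (s + 1), by linear_combination hu.sq_sub_mul_add_sq s⟩

end CommRing

theorem nonneg_and_le_succ {k : ℤ} {u : ℕ → ℤ} (hu : IsLucasU k u) (hk : 2 ≤ k) (p : ℕ) :
    0 ≤ u p ∧ u p ≤ u (p + 1) := by
  induction p with
  | zero => simp [hu.zero, hu.one]
  | succ n ih =>
    refine ⟨ih.1.trans ih.2, ?_⟩
    rw [hu.succ_succ n]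
    nlinarith [ih.1.trans ih.2]

theorem gcd_two_mul_add_two_sub_one {k : ℤ} {u : ℕ → ℤ} (hu : IsLucasU k u) (hk : 2 ≤ k)
    (s : ℕ) : (Int.gcd (u (2 * s + 2) - 1) (u (2 * s + 1)) : ℤ) = u s + u (s + 1) := by
  have hnonneg : 0 ≤ u (s + 1) + u s :=
    add_nonneg (hu.nonneg_and_le_succ hk (s + 1)).1 (hu.nonneg_and_le_succ hk s).1
  rw [hu.two_mul_add_two_sub_one_eq_mul, hu.two_mul_add_one_eq_mul, Int.gcd_mul_left,
    Int.isCoprime_iff_gcd_eq_one.mp (hu.isCoprime_cofactors s), mul_one,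
    Int.natCast_natAbs, abs_of_nonneg hnonneg, add_comm]

end IsLucasU

theorem stmt9_general (m : ℕ) (u : ℕ → ℤ)
    (hu0 : u 0 = 0) (hu1 : u 1 = 1)
    (hurec : ∀ p, 2 ≤ p → u p = (m + 2) * u (p - 1) - u (p - 2)) :
    ∀ s : ℕ, (Int.gcd (u (2 * s + 2) - 1) (u (2 * s + 1)) : ℤ) = u s + u (s + 1) := by
  have hu : IsLucasU ((m : ℤ) + 2) u :=
    ⟨hu0, hu1, fun p => by simpa using hurec (p + 2) (by omega)⟩
  exact hu.gcd_two_mul_add_two_sub_one (by omega)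

/-- For every nonnegative integer `s`, `gcd (u (2s+2) - 1) (u (2s+1)) = u s + u (s+1)`. -/
theorem stmt9 (m : ℕ) (hm : 1 ≤ m) (u : ℕ → ℤ)
    (hu0 : u 0 = 0) (hu1 : u 1 = 1)
    (hurec : ∀ p, 2 ≤ p → u p = (m + 2) * u (p - 1) - u (p - 2)) :
    ∀ s : ℕ, (Int.gcd (u (2 * s + 2) - 1) (u (2 * s + 1)) : ℤ) = u s + u (s + 1) :=
  stmt9_general m u hu0 hu1 hurec
end

section
/- For every nonnegative integer s, gcd(u_{2s+1} - 1, u_{2s}) = gcd(m, 2)·u_s. -/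
/-!
Write `c = m + 2`. The addition formula and the Cassini identity
`u (s+1)^2 - c u (s+1) u s + u s^2 = 1` factor both `u (2s+1) - 1` and `u (2s)` as `u s` times
`A = c u (s+1) - 2 u s`, resp. `B = 2 u (s+1) - c u s`. Cassini gives `u (s+1) B - u s A = 2`,
so `gcd A B ∣ 2`, and any common divisor of `A`, `B`, `2` divides `c u (s+1)` and `c u s`, hence
`c`, because `u (s+1)` and `u s` are coprime. So `gcd A B = gcd c 2 = gcd m 2`.
-/

theorem Int.gcd_mul_sub_two_mul_two_mul_sub_mul {c x y : ℤ}
    (h : x ^ 2 - c * x * y + y ^ 2 = 1) :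
    Int.gcd (c * x - 2 * y) (2 * x - c * y) = Int.gcd c 2 := by
  apply Nat.dvd_antisymm
  · set d : ℤ := (Int.gcd (c * x - 2 * y) (2 * x - c * y) : ℤ)
    have hA : d ∣ c * x - 2 * y := Int.gcd_dvd_left _ _
    have hB : d ∣ 2 * x - c * y := Int.gcd_dvd_right _ _
    have h2 : d ∣ 2 := by
      have : (2 : ℤ) = x * (2 * x - c * y) - y * (c * x - 2 * y) := by linear_combination -2 * h
      exact this ▸ dvd_sub (hB.mul_left x) (hA.mul_left y)
    have hcx : d ∣ c * x := by
      simpa using dvd_add hA (h2.mul_right y)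
    have hcy : d ∣ c * y := by
      simpa using dvd_sub (h2.mul_right x) hB
    have hc : d ∣ c := by
      have : c = c * x * (x - c * y) + c * y * y := by linear_combination -c * h
      exact this ▸ dvd_add (hcx.mul_right _) (hcy.mul_right _)
    exact Int.dvd_gcd hc h2
  · have hc : ((Int.gcd c 2 : ℕ) : ℤ) ∣ c := Int.gcd_dvd_left _ _
    have h2 : ((Int.gcd c 2 : ℕ) : ℤ) ∣ 2 := Int.gcd_dvd_right _ _
    exact Int.dvd_gcd (dvd_sub (hc.mul_right x) (h2.mul_right y))
      (dvd_sub (h2.mul_right x) (hc.mul_right y))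

/-- The Lucas sequence `U_n(c, 1)`. -/
structure IsLucasSequence (c : ℤ) (u : ℕ → ℤ) : Prop where
  zero : u 0 = 0
  one : u 1 = 1
  add_two : ∀ n, u (n + 2) = c * u (n + 1) - u n

namespace IsLucasSequence

variable {c : ℤ} {u : ℕ → ℤ} (hu : IsLucasSequence c u)
include hu

theorem add_add_one (m n : ℕ) : u (m + n + 1) = u (m + 1) * u (n + 1) - u m * u n := by
  induction m generalizing n with
  | zero => simp [hu.zero, hu.one]
  | succ m ih =>
    rw [show m + 1 + n + 1 = m + (n + 1) + 1 by omega, ih, hu.add_two, hu.add_two]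
    ring

theorem cassini (n : ℕ) : u (n + 1) ^ 2 - c * u (n + 1) * u n + u n ^ 2 = 1 := by
  induction n with
  | zero => simp [hu.zero, hu.one]
  | succ n ih =>
    rw [hu.add_two]
    linear_combination ih

theorem two_mul (n : ℕ) : u (2 * n) = u n * (2 * u (n + 1) - c * u n) := by
  cases n with
  | zero => simp [hu.zero]
  | succ n =>
    rw [show 2 * (n + 1) = (n + 1) + n + 1 by omega, hu.add_add_one, hu.add_two n]
    ring

theorem two_mul_add_one_sub_one (n : ℕ) :
    u (2 * n + 1) - 1 = u n * (c * u (n + 1) - 2 * u n) := by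
  rw [show 2 * n + 1 = n + n + 1 by omega, hu.add_add_one]
  linear_combination hu.cassini n

theorem monotone (hc : 2 ≤ c) : Monotone u := by
  have h : ∀ n, 0 ≤ u n ∧ u n ≤ u (n + 1) := by
    intro n
    induction n with
    | zero => simp [hu.zero, hu.one]
    | succ n ih =>
      refine ⟨ih.1.trans ih.2, ?_⟩
      rw [hu.add_two]
      nlinarith
  exact monotone_nat_of_le_succ fun n => (h n).2

theorem nonneg (hc : 2 ≤ c) (n : ℕ) : 0 ≤ u n :=
  hu.zero ▸ hu.monotone hc (Nat.zero_le n)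

end IsLucasSequence

theorem stmt10_general (m : ℕ) (u : ℕ → ℤ)
    (hu0 : u 0 = 0) (hu1 : u 1 = 1)
    (hurec : ∀ p, 2 ≤ p → u p = (m + 2) * u (p - 1) - u (p - 2)) :
    ∀ s : ℕ, (Int.gcd (u (2 * s + 1) - 1) (u (2 * s)) : ℤ) = (Nat.gcd m 2 : ℤ) * u s := by
  have hu : IsLucasSequence (m + 2) u :=
    ⟨hu0, hu1, fun n => by simpa using hurec (n + 2) (by omega)⟩
  intro s
  have hgcd : Int.gcd ((m : ℤ) + 2) 2 = Nat.gcd m 2 := by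
    have h := Int.gcd_natCast_natCast (m + 2) 2
    push_cast at h
    rw [h, Nat.gcd_add_self_left]
  rw [hu.two_mul_add_one_sub_one, hu.two_mul, Int.gcd_mul_left,
    Int.gcd_mul_sub_two_mul_two_mul_sub_mul (hu.cassini s), hgcd, Nat.cast_mul,
    Int.natCast_natAbs, abs_of_nonneg (hu.nonneg (by omega) s), mul_comm]

/-- For every nonnegative integer `s`, `gcd (u (2s+1) - 1) (u (2s)) = gcd(m,2) * u s`. -/
theorem stmt10 (m : ℕ) (hm : 1 ≤ m) (u : ℕ → ℤ)
    (hu0 : u 0 = 0) (hu1 : u 1 = 1)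
    (hurec : ∀ p, 2 ≤ p → u p = (m + 2) * u (p - 1) - u (p - 2)) :
    ∀ s : ℕ, (Int.gcd (u (2 * s + 1) - 1) (u (2 * s)) : ℤ) = (Nat.gcd m 2 : ℤ) * u s :=
  stmt10_general m u hu0 hu1 hurec
end

section
/- The 2×2 integer matrix W with entries W = [[u_{n-1}+1, u_n],[u_n, u_{n+1}-1]] has determinant v_n - 2; in particular for n = 2s+1, det W = m·(u_s + u_{s+1})², and for n = 2s, det W = m(m+4)·u_s². -/
/-!
With `x = m + 2`, the sequences are the rescaled Chebyshev polynomials evaluated at `x`: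
`u n = S (n - 1) x` and `v n = C n x`. The determinant is then `-1 + (S n - S (n - 2))` by the
Cassini identity `S (n - 2) * S n = S (n - 1) ^ 2 - 1`, i.e. `C n - 2`. The two special forms
follow from the product formula `C a * C b = C (a + b) + C (a - b)`: it gives
`C (2s) - 2 = C s ^ 2 - 4` and `C (2s + 1) - 2 = C (s + 1) * C s - X - 2`, and both become
squares once `C` is written in terms of `S` and the Cassini identity is used.
-/

open Polynomial Polynomial.Chebyshev

namespace Polynomial.Chebyshev

variable (R : Type*) [CommRing R]

theorem C_add_one_eq_S_sub_S (n : ℤ) : C R (n + 1) = S R (n + 1) - S R (n - 1) := by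
  have h := C_eq_S_sub_X_mul_S R (n + 1)
  rw [add_sub_cancel_right] at h
  linear_combination h + S_sub_one R n

theorem S_sub_one_mul_S_add_one (n : ℤ) : S R (n - 1) * S R (n + 1) = S R n ^ 2 - 1 := by
  have h := S_sq_add_S_sq R (n - 1)
  rw [sub_add_cancel] at h
  linear_combination S R (n - 1) * S_add_one R n - h

theorem C_sq_sub_four (n : ℤ) : C R n ^ 2 - 4 = (X ^ 2 - 4) * S R (n - 1) ^ 2 := by
  have hC := C_eq_S_sub_X_mul_S R n
  have hS := S_sq_add_S_sq R (n - 1)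
  rw [sub_add_cancel] at hS
  linear_combination (C R n + 2 * S R n - X * S R (n - 1)) * hC + 4 * hS

theorem C_two_mul_sub_two (n : ℤ) : C R (2 * n) - 2 = (X ^ 2 - 4) * S R (n - 1) ^ 2 := by
  have h := C_mul_C R n n
  rw [sub_self, C_zero, ← two_mul] at h
  linear_combination C_sq_sub_four R n - h

theorem C_two_mul_add_one_sub_two (n : ℤ) :
    C R (2 * n + 1) - 2 = (X - 2) * (S R n + S R (n - 1)) ^ 2 := by
  have h := C_mul_C R (n + 1) n
  rw [add_sub_cancel_left, C_one, show n + 1 + n = 2 * n + 1 by ring] at h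
  have hC := C_eq_S_sub_X_mul_S R n
  have hC' := C_eq_S_sub_X_mul_S R (n + 1)
  have hS := S_sq_add_S_sq R (n - 1)
  rw [add_sub_cancel_right] at hC'
  rw [sub_add_cancel] at hS
  linear_combination -h + C R (n + 1) * hC + (2 * S R n - X * S R (n - 1)) * hC'
    + 2 * (2 * S R n - X * S R (n - 1)) * S_add_one R n + (X + 2) * hS

variable {R} {x : R}

theorem eq_eval_S_of_recurrence {u : ℕ → R} (h0 : u 0 = 0) (h1 : u 1 = 1)
    (hrec : ∀ p, u (p + 2) = x * u (p + 1) - u p) (n : ℕ) : u n = (S R (n - 1)).eval x := by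
  induction n using Nat.twoStepInduction with
  | zero => simp [h0]
  | one => simp [h1]
  | more k ih0 ih1 =>
    rw [hrec, ih0, ih1, show ((k + 2 : ℕ) : ℤ) - 1 = k - 1 + 2 by push_cast; ring, S_add_two,
      eval_sub, eval_mul, eval_X]
    push_cast
    ring_nf

theorem eq_eval_C_of_recurrence {v : ℕ → R} (h0 : v 0 = 2) (h1 : v 1 = x)
    (hrec : ∀ p, v (p + 2) = x * v (p + 1) - v p) (n : ℕ) : v n = (C R n).eval x := by
  induction n using Nat.twoStepInduction with
  | zero => simp [h0]
  | one => simp [h1]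
  | more k ih0 ih1 =>
    rw [hrec, ih0, ih1, show ((k + 2 : ℕ) : ℤ) = k + 2 by push_cast; ring, C_add_two,
      eval_sub, eval_mul, eval_X]
    push_cast
    ring_nf

theorem det_eq_sub_two_of_recurrence {u v : ℕ → R} (hu0 : u 0 = 0) (hu1 : u 1 = 1)
    (hurec : ∀ p, u (p + 2) = x * u (p + 1) - u p) (hv0 : v 0 = 2) (hv1 : v 1 = x)
    (hvrec : ∀ p, v (p + 2) = x * v (p + 1) - v p) (n : ℕ) :
    (!![u (n - 1) + 1, u n; u n, u (n + 1) - 1] : Matrix (Fin 2) (Fin 2) R).det = v n - 2 := by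
  rcases n with _ | k
  · simp [hu0, hu1, hv0]
  have hu := eq_eval_S_of_recurrence hu0 hu1 hurec
  have hcas := congrArg (eval x) (S_sub_one_mul_S_add_one R k)
  have hC := congrArg (eval x) (C_add_one_eq_S_sub_S R k)
  simp only [eval_mul, eval_sub, eval_pow, eval_one] at hcas hC
  rw [Matrix.det_fin_two_of, Nat.add_sub_cancel, hu k, hu (k + 1), hu (k + 1 + 1),
    eq_eval_C_of_recurrence hv0 hv1 hvrec]
  push_cast
  simp only [add_sub_cancel_right]
  linear_combination hcas - hC

end Polynomial.Chebyshev

theorem stmt12_general (m n : ℕ) (u v : ℕ → ℤ)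
    (hu0 : u 0 = 0) (hu1 : u 1 = 1)
    (hurec : ∀ p, 2 ≤ p → u p = (m + 2) * u (p - 1) - u (p - 2))
    (hv0 : v 0 = 2) (hv1 : v 1 = m + 2)
    (hvrec : ∀ p, 2 ≤ p → v p = (m + 2) * v (p - 1) - v (p - 2)) :
    (!![u (n - 1) + 1, u n; u n, u (n + 1) - 1] : Matrix (Fin 2) (Fin 2) ℤ).det
        = v n - 2 ∧
      (∀ s : ℕ, n = 2 * s + 1 →
        (!![u (n - 1) + 1, u n; u n, u (n + 1) - 1] : Matrix (Fin 2) (Fin 2) ℤ).det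
          = m * (u s + u (s + 1)) ^ 2) ∧
      (∀ s : ℕ, n = 2 * s →
        (!![u (n - 1) + 1, u n; u n, u (n + 1) - 1] : Matrix (Fin 2) (Fin 2) ℤ).det
          = m * (m + 4) * (u s) ^ 2) := by
  have hurec' (p : ℕ) : u (p + 2) = (m + 2) * u (p + 1) - u p := by
    simpa using hurec (p + 2) (by omega)
  have hvrec' (p : ℕ) : v (p + 2) = (m + 2) * v (p + 1) - v p := by
    simpa using hvrec (p + 2) (by omega)
  have hu := eq_eval_S_of_recurrence hu0 hu1 hurec'
  have hv := eq_eval_C_of_recurrence hv0 hv1 hvrec'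
  have hdet := det_eq_sub_two_of_recurrence hu0 hu1 hurec' hv0 hv1 hvrec' n
  refine ⟨hdet, ?_, ?_⟩
  · rintro s rfl
    rw [hdet, hv, hu s, hu (s + 1)]
    have h := congrArg (eval ((m : ℤ) + 2)) (C_two_mul_add_one_sub_two ℤ s)
    simp only [eval_sub, eval_ofNat, eval_mul, eval_X, add_sub_cancel_right, eval_pow,
      eval_add] at h
    push_cast
    simp only [add_sub_cancel_right]
    linear_combination h
  · rintro s rfl
    rw [hdet, hv, hu s]
    have h := congrArg (eval ((m : ℤ) + 2)) (C_two_mul_sub_two ℤ s)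
    simp only [eval_sub, eval_ofNat, eval_mul, eval_pow, eval_X] at h
    push_cast
    linear_combination h

/-- The matrix `W = [[u (n-1) + 1, u n], [u n, u (n+1) - 1]]` has determinant
`v n - 2`; in particular `det W = m * (u s + u (s+1))²` when `n = 2s+1`, and
`det W = m * (m+4) * (u s)²` when `n = 2s`. -/
theorem stmt12 (m n : ℕ) (hm : 1 ≤ m) (hn : 2 ≤ n) (u v : ℕ → ℤ)
    (hu0 : u 0 = 0) (hu1 : u 1 = 1)
    (hurec : ∀ p, 2 ≤ p → u p = (m + 2) * u (p - 1) - u (p - 2))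
    (hv0 : v 0 = 2) (hv1 : v 1 = m + 2)
    (hvrec : ∀ p, 2 ≤ p → v p = (m + 2) * v (p - 1) - v (p - 2)) :
    (!![u (n - 1) + 1, u n; u n, u (n + 1) - 1] : Matrix (Fin 2) (Fin 2) ℤ).det
        = v n - 2 ∧
      (∀ s : ℕ, n = 2 * s + 1 →
        (!![u (n - 1) + 1, u n; u n, u (n + 1) - 1] : Matrix (Fin 2) (Fin 2) ℤ).det
          = m * (u s + u (s + 1)) ^ 2) ∧
      (∀ s : ℕ, n = 2 * s →
        (!![u (n - 1) + 1, u n; u n, u (n + 1) - 1] : Matrix (Fin 2) (Fin 2) ℤ).det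
          = m * (m + 4) * (u s) ^ 2) :=
  stmt12_general m n u v hu0 hu1 hurec hv0 hv1 hvrec
end

section
/- Let n = 2s+1 and W = [[u_{n-1}+1, u_n],[u_n, u_{n+1}-1]]. Then the Smith normal form of W is diag(h_s, m·h_s), where h_s = u_s + u_{s+1}; i.e., the first invariant factor (gcd of the entries of W) equals h_s and the determinant equals m·h_s². -/
/-!
With `a = u s`, `b = u (s+1)`, the addition formula `u (p+q+1) = u (p+1) u (q+1) - u p u q`
factors `W = (a + b) • [[b - (m+1)a, b - a], [b - a, (m+1)b - a]]`. The invariant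
`a² + b² - (m+2)ab = 1` makes `b - (m+1)a` and `b - a` coprime, so the gcd of the entries is
`a + b > 0`, and it makes the determinant of the second factor equal to `m`.
-/

/-- The Lucas sequence `U(k, 1)`; equivalently `u (p + 1) = U_p(k / 2)` for the Chebyshev
polynomials `U_p` of the second kind. -/
structure IsLucasSeq {R : Type*} [CommRing R] (k : R) (u : ℕ → R) : Prop where
  zero : u 0 = 0
  one : u 1 = 1
  succ_succ : ∀ p, u (p + 2) = k * u (p + 1) - u p

namespace IsLucasSeq

section CommRing

variable {R : Type*} [CommRing R] {k : R} {u : ℕ → R}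

theorem sq_add_sq_sub_mul (hu : IsLucasSeq k u) (p : ℕ) :
    u p ^ 2 + u (p + 1) ^ 2 - k * u p * u (p + 1) = 1 := by
  induction p with
  | zero => simp [hu.zero, hu.one]
  | succ p ih => rw [hu.succ_succ p]; linear_combination ih

theorem add_add_one (hu : IsLucasSeq k u) (p q : ℕ) :
    u (p + q + 1) = u (p + 1) * u (q + 1) - u p * u q := by
  induction q generalizing p with
  | zero => simp [hu.zero, hu.one]
  | succ q ih =>
    rw [show p + (q + 1) + 1 = p + 1 + q + 1 by omega, ih (p + 1), hu.succ_succ p,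
      hu.succ_succ q]
    ring

theorem apply_two_mul_succ (hu : IsLucasSeq k u) (s : ℕ) :
    u (2 * s + 1) = (u s + u (s + 1)) * (u (s + 1) - u s) := by
  rw [two_mul, hu.add_add_one]
  ring

theorem apply_two_mul_add_two_sub_one (hu : IsLucasSeq k u) (s : ℕ) :
    u (2 * s + 2) - 1 = (u s + u (s + 1)) * ((k - 1) * u (s + 1) - u s) := by
  rw [show 2 * s + 2 = s + 1 + s + 1 by omega, hu.add_add_one, hu.succ_succ s]
  linear_combination hu.sq_add_sq_sub_mul s

theorem apply_two_mul_add_one (hu : IsLucasSeq k u) (s : ℕ) :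
    u (2 * s) + 1 = (u s + u (s + 1)) * (u (s + 1) - (k - 1) * u s) := by
  linear_combination
    hu.succ_succ (2 * s) + k * hu.apply_two_mul_succ s - hu.apply_two_mul_add_two_sub_one s

theorem isCoprime_cofactors (hu : IsLucasSeq k u) (s : ℕ) :
    IsCoprime (u (s + 1) - (k - 1) * u s) (u (s + 1) - u s) :=
  ⟨u (s + 1), -u s, by linear_combination hu.sq_add_sq_sub_mul s⟩

theorem det_eq (hu : IsLucasSeq k u) (s : ℕ) :
    (!![u (2 * s) + 1, u (2 * s + 1); u (2 * s + 1), u (2 * s + 2) - 1]).det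
      = (k - 2) * (u s + u (s + 1)) ^ 2 := by
  rw [Matrix.det_fin_two_of, hu.apply_two_mul_add_one, hu.apply_two_mul_succ,
    hu.apply_two_mul_add_two_sub_one]
  linear_combination (k - 2) * (u s + u (s + 1)) ^ 2 * hu.sq_add_sq_sub_mul s

end CommRing

theorem nonneg_and_lt_succ {R : Type*} [CommRing R] [LinearOrder R] [IsStrictOrderedRing R]
    {k : R} {u : ℕ → R} (hu : IsLucasSeq k u) (hk : 2 ≤ k) (p : ℕ) :
    0 ≤ u p ∧ u p < u (p + 1) := by
  induction p with
  | zero => simp [hu.zero, hu.one]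
  | succ p ih =>
    obtain ⟨hp, hlt⟩ := ih
    have hk' : 0 ≤ (k - 2) * u (p + 1) := mul_nonneg (by linarith) (by linarith)
    refine ⟨by linarith, ?_⟩
    rw [hu.succ_succ p]
    linarith

end IsLucasSeq

theorem Int.gcd_gcd_mul_left_of_isCoprime {h x y : ℤ} (hxy : IsCoprime x y) (z : ℤ) :
    (Int.gcd (Int.gcd (h * x) (h * y)) (h * z) : ℤ) = |h| := by
  rw [Int.gcd_mul_left, Int.isCoprime_iff_gcd_eq_one.mp hxy, mul_one, Int.natCast_natAbs,
    Int.gcd_eq_left (abs_nonneg h) ((abs_dvd h _).mpr (dvd_mul_right h z))]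

theorem stmt13_general (m s : ℕ) (n : ℕ) (hn : n = 2 * s + 1)
    (u : ℕ → ℤ)
    (hu0 : u 0 = 0) (hu1 : u 1 = 1)
    (hurec : ∀ p, 2 ≤ p → u p = (m + 2) * u (p - 1) - u (p - 2)) :
    (Int.gcd (Int.gcd (u (n - 1) + 1) (u n)) (u (n + 1) - 1) : ℤ)
        = u s + u (s + 1) ∧
      (!![u (n - 1) + 1, u n; u n, u (n + 1) - 1] : Matrix (Fin 2) (Fin 2) ℤ).det
        = m * (u s + u (s + 1)) ^ 2 := by
  have hu : IsLucasSeq ((m : ℤ) + 2) u := ⟨hu0, hu1, fun p => hurec (p + 2) (by omega)⟩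
  subst hn
  rw [show 2 * s + 1 - 1 = 2 * s by omega, show 2 * s + 1 + 1 = 2 * s + 2 by omega]
  refine ⟨?_, by rw [hu.det_eq]; ring⟩
  have hpos : 0 < u s + u (s + 1) := by
    obtain ⟨hs0, hlt⟩ := hu.nonneg_and_lt_succ (by omega) s
    linarith
  rw [hu.apply_two_mul_add_one, hu.apply_two_mul_succ, hu.apply_two_mul_add_two_sub_one,
    Int.gcd_gcd_mul_left_of_isCoprime (hu.isCoprime_cofactors s), abs_of_pos hpos]

/-- For `n = 2s+1`, the Smith normal form of `W = [[u (n-1)+1, u n],[u n, u (n+1)-1]]`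
is `diag(h_s, m·h_s)` with `h_s = u s + u (s+1)`: the gcd of the entries of `W`
equals `h_s` and the determinant equals `m·h_s²`. -/
theorem stmt13 (m s : ℕ) (hm : 1 ≤ m) (hs : 1 ≤ s) (n : ℕ) (hn : n = 2 * s + 1)
    (u : ℕ → ℤ)
    (hu0 : u 0 = 0) (hu1 : u 1 = 1)
    (hurec : ∀ p, 2 ≤ p → u p = (m + 2) * u (p - 1) - u (p - 2)) :
    (Int.gcd (Int.gcd (u (n - 1) + 1) (u n)) (u (n + 1) - 1) : ℤ)
        = u s + u (s + 1) ∧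
      (!![u (n - 1) + 1, u n; u n, u (n + 1) - 1] : Matrix (Fin 2) (Fin 2) ℤ).det
        = m * (u s + u (s + 1)) ^ 2 :=
  stmt13_general m s n hn u hu0 hu1 hurec
end

section
/- Let n = 2s and W = [[u_{n-1}+1, u_n],[u_n, u_{n+1}-1]]. Then the Smith normal form of W is diag(gcd(m,2)·u_s, m(m+4)·u_s/gcd(m,2)); i.e., the gcd of the entries of W equals gcd(m,2)·u_s and the determinant equals m(m+4)·u_s². -/
/-!
Put `V p = u (p+1) - u (p-1)`, the companion Lucas sequence. The addition formula and Cassini's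
identity for `u` give `W = u_s • [[V (s-1), V s], [V s, V (s+1)]]`. Since `V` satisfies the same
recurrence `V (p+2) = (m+2) V (p+1) - V p`, both `gcd (V p, V (p+1))` and
`V p V (p+2) - V (p+1)²` are independent of `p`; they equal `gcd (2, m+2) = gcd (m, 2)` and
`(m+2)² - 4 = m (m+4)`, their values at `p = 0`.
-/

theorem Int.gcd_gcd_mul_mul_mul_sub (c a b K : ℤ) :
    Int.gcd (Int.gcd (c * a) (c * b)) (c * (K * b - a)) = c.natAbs * Int.gcd a b := by
  have hd : (Int.gcd (c * a) (c * b) : ℤ) ∣ c * (K * b - a) := by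
    rw [mul_sub, mul_left_comm]
    exact dvd_sub ((Int.gcd_dvd_right _ _).mul_left K) (Int.gcd_dvd_left _ _)
  rw [← Int.gcd_mul_left]
  exact_mod_cast Int.gcd_eq_left (by positivity) hd

def LucasRec {R : Type*} [CommRing R] (K : R) (x : ℕ → R) : Prop :=
  ∀ p, x (p + 2) = K * x (p + 1) - x p

/-- For the fundamental solution `u` this is `V p = u (p+1) - u (p-1)`, written without `u (-1)`. -/
def lucasCompanion {R : Type*} [CommRing R] (K : R) (x : ℕ → R) (p : ℕ) : R :=
  2 * x (p + 1) - K * x p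

namespace LucasRec

section CommRing

variable {R : Type*} [CommRing R] {K : R} {x y u : ℕ → R}

theorem ext (hx : LucasRec K x) (hy : LucasRec K y) (h0 : x 0 = y 0) (h1 : x 1 = y 1) :
    x = y := by
  have key : ∀ p, x p = y p ∧ x (p + 1) = y (p + 1) := by
    intro p
    induction p with
    | zero => exact ⟨h0, h1⟩
    | succ p ih => exact ⟨ih.2, by rw [hx, hy, ih.1, ih.2]⟩
  exact funext fun p => (key p).1

theorem lucasCompanion (hx : LucasRec K x) : LucasRec K (lucasCompanion K x) := by
  intro p
  simp only [_root_.lucasCompanion]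
  rw [hx (p + 1), hx p]
  ring

theorem mul_sub_sq (hx : LucasRec K x) (p : ℕ) :
    x p * x (p + 2) - x (p + 1) ^ 2 = x 0 * x 2 - x 1 ^ 2 := by
  induction p with
  | zero => rfl
  | succ p ih =>
    rw [← ih, hx (p + 1), hx p]
    ring

theorem add_add_one (hu : LucasRec K u) (hu0 : u 0 = 0) (hu1 : u 1 = 1) (hx : LucasRec K x)
    (p q : ℕ) :
    x (p + q + 1) = x (p + 1) * u (q + 1) - x p * u q := by
  have h := ext (x := fun q => x (p + q + 1)) (y := fun q => x (p + 1) * u (q + 1) - x p * u q)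
    (fun q => hx (p + q + 1)) (fun q => by simp only; rw [hu (q + 1), hu q]; ring)
    (by simp [hu0, hu1]) (by simp [hu 0, hu0, hu1, hx p, mul_comm])
  exact congrFun h q

theorem sq_sub_mul (hu : LucasRec K u) (hu0 : u 0 = 0) (hu1 : u 1 = 1) (p : ℕ) :
    u (p + 1) ^ 2 - u p * u (p + 2) = 1 := by
  have h := hu.mul_sub_sq p
  rw [hu 0, hu0, hu1] at h
  linear_combination -h

theorem lucasCompanion_zero (hu0 : u 0 = 0) (hu1 : u 1 = 1) :
    _root_.lucasCompanion K u 0 = 2 := by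
  simp [_root_.lucasCompanion, hu0, hu1]

theorem lucasCompanion_one (hu : LucasRec K u) (hu0 : u 0 = 0) (hu1 : u 1 = 1) :
    _root_.lucasCompanion K u 1 = K := by
  simp only [_root_.lucasCompanion, hu 0, hu0, hu1]
  ring

theorem two_mul_add_one_add_one (hu : LucasRec K u) (hu0 : u 0 = 0) (hu1 : u 1 = 1) (t : ℕ) :
    u (2 * t + 1) + 1 = u (t + 1) * _root_.lucasCompanion K u t := by
  have h1 := hu.add_add_one hu0 hu1 hu t t
  have h2 := hu.sq_sub_mul hu0 hu1 t
  rw [two_mul]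
  simp only [_root_.lucasCompanion]
  linear_combination h1 - h2 - u t * hu t

theorem two_mul_add_two (hu : LucasRec K u) (hu0 : u 0 = 0) (hu1 : u 1 = 1) (t : ℕ) :
    u (2 * t + 2) = u (t + 1) * _root_.lucasCompanion K u (t + 1) := by
  have h1 := hu.add_add_one hu0 hu1 hu (t + 1) t
  rw [show 2 * t + 2 = t + 1 + t + 1 by ring]
  simp only [_root_.lucasCompanion]
  linear_combination h1 - u (t + 1) * hu t

theorem two_mul_add_three_sub_one (hu : LucasRec K u) (hu0 : u 0 = 0) (hu1 : u 1 = 1) (t : ℕ) :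
    u (2 * t + 3) - 1 = u (t + 1) * _root_.lucasCompanion K u (t + 2) := by
  have h1 := hu.add_add_one hu0 hu1 hu (t + 1) (t + 1)
  have h2 := hu.sq_sub_mul hu0 hu1 t
  rw [show 2 * t + 3 = t + 1 + (t + 1) + 1 by ring]
  simp only [_root_.lucasCompanion]
  linear_combination h1 + h2 + u (t + 2) * hu t - 2 * u (t + 1) * hu (t + 1)

end CommRing

theorem gcd_eq {K : ℤ} {x : ℕ → ℤ} (hx : LucasRec K x) (p : ℕ) :
    Int.gcd (x p) (x (p + 1)) = Int.gcd (x 0) (x 1) := by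
  induction p with
  | zero => rfl
  | succ p ih => rw [← ih, hx p, Int.gcd_mul_right_sub_right, Int.gcd_comm]

theorem monotone {R : Type*} [CommRing R] [LinearOrder R] [IsStrictOrderedRing R] {K : R}
    {x : ℕ → R} (hK : 2 ≤ K) (hx : LucasRec K x) (h0 : 0 ≤ x 0) (h01 : x 0 ≤ x 1) :
    Monotone x := by
  have key : ∀ p, 0 ≤ x p ∧ x p ≤ x (p + 1) := by
    intro p
    induction p with
    | zero => exact ⟨h0, h01⟩
    | succ p ih =>
      refine ⟨ih.1.trans ih.2, ?_⟩
      rw [hx p]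
      nlinarith [ih.1, ih.2]
  exact monotone_nat_of_le_succ fun p => (key p).2

end LucasRec


theorem stmt14_general (m s : ℕ) (hs : 1 ≤ s) (n : ℕ) (hn : n = 2 * s)
    (u : ℕ → ℤ)
    (hu0 : u 0 = 0) (hu1 : u 1 = 1)
    (hurec : ∀ p, 2 ≤ p → u p = (m + 2) * u (p - 1) - u (p - 2)) :
    (Int.gcd (Int.gcd (u (n - 1) + 1) (u n)) (u (n + 1) - 1) : ℤ)
        = (Nat.gcd m 2 : ℤ) * u s ∧
      (!![u (n - 1) + 1, u n; u n, u (n + 1) - 1] : Matrix (Fin 2) (Fin 2) ℤ).det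
        = m * (m + 4) * (u s) ^ 2 := by
  set K : ℤ := m + 2
  have hu : LucasRec K u := fun p => by simpa using hurec (p + 2) (by omega)
  have hV := hu.lucasCompanion
  have hV0 := LucasRec.lucasCompanion_zero (K := K) hu0 hu1
  have hV1 := hu.lucasCompanion_one hu0 hu1
  obtain ⟨t, rfl⟩ : ∃ t, s = t + 1 := ⟨s - 1, by omega⟩
  obtain rfl : n = 2 * t + 2 := by omega
  rw [show 2 * t + 2 - 1 = 2 * t + 1 by omega, show 2 * t + 2 + 1 = 2 * t + 3 by omega,
    hu.two_mul_add_one_add_one hu0 hu1, hu.two_mul_add_two hu0 hu1,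
    hu.two_mul_add_three_sub_one hu0 hu1]
  constructor
  · have hpos : 0 ≤ u (t + 1) := by
      simpa [hu0] using
        hu.monotone (by simp [K]) (by simp [hu0]) (by simp [hu0, hu1]) (Nat.zero_le (t + 1))
    have hgcd : Int.gcd 2 K = Nat.gcd m 2 := by
      rw [show Int.gcd 2 K = Int.gcd ((2 : ℕ) : ℤ) ((m + 2 : ℕ) : ℤ) by simp [K],
        Int.gcd_natCast_natCast, Nat.gcd_add_self_right, Nat.gcd_comm]
    rw [hV t, Int.gcd_gcd_mul_mul_mul_sub, hV.gcd_eq, hV0, hV1, hgcd]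
    push_cast
    rw [abs_of_nonneg hpos, mul_comm]
  · have hdet := hV.mul_sub_sq t
    rw [hV 0, hV0, hV1] at hdet
    rw [Matrix.det_fin_two_of]
    linear_combination u (t + 1) ^ 2 * hdet

/-- For `n = 2s`, the Smith normal form of `W = [[u (n-1)+1, u n],[u n, u (n+1)-1]]`
is `diag(gcd(m,2)·u_s, m(m+4)·u_s / gcd(m,2))`: the gcd of the entries of `W`
equals `gcd(m,2)·u_s` and the determinant equals `m(m+4)·u_s²`. -/
theorem stmt14 (m s : ℕ) (hm : 1 ≤ m) (hs : 1 ≤ s) (n : ℕ) (hn : n = 2 * s)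
    (u : ℕ → ℤ)
    (hu0 : u 0 = 0) (hu1 : u 1 = 1)
    (hurec : ∀ p, 2 ≤ p → u p = (m + 2) * u (p - 1) - u (p - 2)) :
    (Int.gcd (Int.gcd (u (n - 1) + 1) (u n)) (u (n + 1) - 1) : ℤ)
        = (Nat.gcd m 2 : ℤ) * u s ∧
      (!![u (n - 1) + 1, u n; u n, u (n + 1) - 1] : Matrix (Fin 2) (Fin 2) ℤ).det
        = m * (m + 4) * (u s) ^ 2 :=
  stmt14_general m s hs n hn u hu0 hu1 hurec
end

section
/- Let n = 2s+1 and B = [[n, τ_{n-1}, τ_n],[0, τ_n - τ_{n-1}, τ_{n+1} - τ_n],[0, u_n, u_{n+1} - 1]]. Then the gcd of all entries of B equals gcd(n, g_s), where g_s = τ_s + τ_{s+1}. -/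
namespace IsLucasU

variable {R : Type*} [CommRing R] {k : R} {u : ℕ → R}

theorem apply_add_add_one (hu : IsLucasU k u) (p q : ℕ) :
    u (p + q + 1) = u (p + 1) * u (q + 1) - u p * u q := by
  induction q generalizing p with
  | zero => simp [hu.zero, hu.one]
  | succ q ih =>
    rw [show p + (q + 1) + 1 = p + 1 + q + 1 by ring, ih, hu.succ_succ, hu.succ_succ]
    ring

theorem apply_two_mul_add_one (hu : IsLucasU k u) (p : ℕ) :
    u (2 * p + 1) = u (p + 1) ^ 2 - u p ^ 2 := by
  rw [two_mul, hu.apply_add_add_one]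
  ring

theorem apply_two_mul (hu : IsLucasU k u) (p : ℕ) :
    u (2 * p) = u p * (2 * u (p + 1) - k * u p) := by
  have h := hu.apply_add_add_one (p + 1) p
  rw [show p + 1 + p + 1 = 2 * p + 2 by ring, hu.succ_succ, hu.succ_succ,
    hu.apply_two_mul_add_one] at h
  linear_combination -h

theorem isCoprime_sub_mul {m : R} (hu : IsLucasU (m + 2) u) (p : ℕ) :
    IsCoprime (u (p + 1) - u p) (m * u p) :=
  ⟨u (p + 1) - u p, -u (p + 1), by linear_combination hu.sq_sub_mul_add_sq p⟩

end IsLucasU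

theorem IsCoprime.dvd_of_dvd_mul_of_dvd_mul {R : Type*} [CommSemiring R] {a b c d : R}
    (H : IsCoprime a b) (ha : d ∣ a * c) (hb : d ∣ b * c) : d ∣ c := by
  obtain ⟨x, y, hxy⟩ := H
  have h := dvd_add (ha.mul_left x) (hb.mul_left y)
  rwa [← mul_assoc, ← mul_assoc, ← add_mul, hxy, one_mul] at h

section Tau

variable {m : ℤ} {u τ : ℕ → ℤ}

theorem tau_two_mul_add_one (hm : m ≠ 0) (hu : IsLucasU (m + 2) u)
    (hτ : ∀ p : ℕ, m * τ p = p - u p) (s : ℕ) :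
    τ (2 * s + 1) =
      (2 * s + 1) * (τ (s + 1) - τ s) + (u (s + 1) - u s) * (τ s + τ (s + 1)) := by
  refine mul_left_cancel₀ hm ?_
  have h := hτ (2 * s + 1)
  have h1 := hτ (s + 1)
  push_cast at h h1
  rw [hu.apply_two_mul_add_one] at h
  linear_combination h + (2 * s + 1 - u (s + 1) + u s) * hτ s
    + (-(2 * s + 1) - u (s + 1) + u s) * h1

theorem tau_two_mul_add_one_sub (hm : m ≠ 0) (hu : IsLucasU (m + 2) u)
    (hτ : ∀ p : ℕ, m * τ p = p - u p) (s : ℕ) :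
    τ (2 * s + 1) - τ (2 * s) = m * u s * (τ s + τ (s + 1)) - (2 * s + 1) * u s := by
  refine mul_left_cancel₀ hm ?_
  have h := hτ (2 * s + 1)
  have h0 := hτ (2 * s)
  have h1 := hτ (s + 1)
  push_cast at h h0 h1
  rw [hu.apply_two_mul_add_one] at h
  rw [hu.apply_two_mul] at h0
  linear_combination h - h0 - m * u s * hτ s - m * u s * h1 - hu.sq_sub_mul_add_sq s

theorem tau_add_two_sub (hm : m ≠ 0) (hu : IsLucasU (m + 2) u)
    (hτ : ∀ p : ℕ, m * τ p = p - u p) (p : ℕ) :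
    τ (p + 2) - τ (p + 1) = τ (p + 1) - τ p - u (p + 1) := by
  refine mul_left_cancel₀ hm ?_
  have h2 := hτ (p + 2)
  have h1 := hτ (p + 1)
  push_cast at h2 h1
  linear_combination h2 - 2 * h1 + hτ p - hu.succ_succ p

theorem u_add_two_sub_one (hu : IsLucasU (m + 2) u)
    (hτ : ∀ p : ℕ, m * τ p = p - u p) (p : ℕ) :
    u (p + 2) - 1 = (m + 1) * u (p + 1) - m * (τ (p + 1) - τ p) := by
  have h1 := hτ (p + 1)
  push_cast at h1
  linear_combination hu.succ_succ p + h1 - hτ p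

theorem dvd_tau_two_mul_add_one_iff (hm : m ≠ 0) (hu : IsLucasU (m + 2) u)
    (hτ : ∀ p : ℕ, m * τ p = p - u p) (s : ℕ) (d : ℤ) :
    (d ∣ 2 * s + 1 ∧ d ∣ τ (2 * s + 1) ∧ d ∣ τ (2 * s + 1) - τ (2 * s)) ↔
      d ∣ 2 * s + 1 ∧ d ∣ τ s + τ (s + 1) := by
  rw [tau_two_mul_add_one_sub hm hu hτ, tau_two_mul_add_one hm hu hτ]
  constructor
  · rintro ⟨hn, hτn, hΔ⟩
    refine ⟨hn, (hu.isCoprime_sub_mul s).dvd_of_dvd_mul_of_dvd_mul ?_ ?_⟩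
    · exact (dvd_add_right (hn.mul_right _)).mp hτn
    · exact (dvd_sub_left (hn.mul_right _)).mp hΔ
  · rintro ⟨hn, hg⟩
    exact ⟨hn, dvd_add (hn.mul_right _) (hg.mul_left _),
      dvd_sub (hg.mul_left _) (hn.mul_right _)⟩

end Tau

theorem stmt15_general (m s : ℕ) (hm : 1 ≤ m) (n : ℕ) (hn : n = 2 * s + 1)
    (u τ : ℕ → ℤ)
    (hu0 : u 0 = 0) (hu1 : u 1 = 1)
    (hurec : ∀ p, 2 ≤ p → u p = (m + 2) * u (p - 1) - u (p - 2))
    (hτ : ∀ p : ℕ, (m : ℤ) * τ p = (p : ℤ) - u p) :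
    Int.gcd (Int.gcd (Int.gcd (Int.gcd (Int.gcd (Int.gcd (Int.gcd (Int.gcd
        ((n : ℤ)) (τ (n - 1))) (τ n)) 0) (τ n - τ (n - 1))) (τ (n + 1) - τ n)) 0)
        (u n)) (u (n + 1) - 1)
      = Int.gcd (n : ℤ) (τ s + τ (s + 1)) := by
  subst hn
  have hu : IsLucasU ((m : ℤ) + 2) u :=
    ⟨hu0, hu1, fun p => by simpa using hurec (p + 2) (by omega)⟩
  have hm0 : (m : ℤ) ≠ 0 := by positivity
  refine Nat.dvd_left_iff_eq.mp fun d => ?_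
  simp only [Int.dvd_gcd_iff, Int.dvd_coe_gcd_iff, dvd_zero, and_true, add_tsub_cancel_right]
  push_cast
  rw [← dvd_tau_two_mul_add_one_iff hm0 hu hτ s, tau_add_two_sub hm0 hu hτ (2 * s),
    u_add_two_sub_one hu hτ (2 * s), show u (2 * s + 1) = 2 * s + 1 - m * τ (2 * s + 1) by
      rw [hτ]; push_cast; ring]
  constructor
  · rintro ⟨⟨⟨⟨⟨⟨hn, -⟩, hτn⟩, hΔ⟩, -⟩, -⟩, -⟩
    exact ⟨hn, hτn, hΔ⟩
  · rintro ⟨hn, hτn, hΔ⟩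
    have hun := dvd_sub hn (hτn.mul_left m)
    exact ⟨⟨⟨⟨⟨⟨hn, (dvd_sub_right hτn).mp hΔ⟩, hτn⟩, hΔ⟩, dvd_sub hΔ hun⟩, hun⟩,
      dvd_sub (hun.mul_left _) (hΔ.mul_left _)⟩

/-- For `n = 2s+1`, the gcd of all entries of
`B = [[n, τ (n-1), τ n],[0, τ n - τ (n-1), τ (n+1) - τ n],[0, u n, u (n+1) - 1]]`
equals `gcd (n, g_s)` where `g_s = τ s + τ (s+1)`. -/
theorem stmt15 (m s : ℕ) (hm : 1 ≤ m) (hs : 1 ≤ s) (n : ℕ) (hn : n = 2 * s + 1)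
    (u τ : ℕ → ℤ)
    (hu0 : u 0 = 0) (hu1 : u 1 = 1)
    (hurec : ∀ p, 2 ≤ p → u p = (m + 2) * u (p - 1) - u (p - 2))
    (hτ : ∀ p : ℕ, (m : ℤ) * τ p = (p : ℤ) - u p) :
    Int.gcd (Int.gcd (Int.gcd (Int.gcd (Int.gcd (Int.gcd (Int.gcd (Int.gcd
        ((n : ℤ)) (τ (n - 1))) (τ n)) 0) (τ n - τ (n - 1))) (τ (n + 1) - τ n)) 0)
        (u n)) (u (n + 1) - 1)
      = Int.gcd (n : ℤ) (τ s + τ (s + 1)) :=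
  stmt15_general m s hm n hn u τ hu0 hu1 hurec hτ
end
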